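/- arXiv:2209.06744 — 3 statements merged into one kernel-verified Lean document; each statement's English description precedes it below -/
import Mathlib

section
/- For every unit square S in T8, any two distinct edges in G_S are at distance 1 or at distance 2. Consequently, every L(1,2)-edge labeling of T8 is injective on G_S, so the 26 edges of G_S receive 26 pairwise distinct labels. -/
/-- The infinite octagonal grid (king graph on `ℤ × ℤ`): distinct vertices are
adjacent iff their Chebyshev distance is `1`. -/
def T8 : SimpleGraph (ℤ × ℤ) where
  Adj u v := u ≠ v ∧ max |u.1 - v.1| |u.2 - v.2| = 1
  symm := by
    constructor
    rintro u v ⟨h1, h2⟩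
    refine ⟨h1.symm, ?_⟩
    rw [abs_sub_comm v.1 u.1, abs_sub_comm v.2 u.2]
    exact h2
  loopless := by constructor; rintro u ⟨h, -⟩; exact h rfl

/-- Two (unordered pairs regarded as) edges share an endpoint. -/
def SharesEndpoint (e1 e2 : Sym2 (ℤ × ℤ)) : Prop := ∃ v, v ∈ e1 ∧ v ∈ e2

/-- Two edges of `T8` are at distance `1`: distinct and sharing an endpoint. -/
def EdgeDist1 (e1 e2 : Sym2 (ℤ × ℤ)) : Prop := e1 ≠ e2 ∧ SharesEndpoint e1 e2

/-- Two edges of `T8` are at distance `2`: distinct, sharing no endpoint, but some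
edge of `T8` shares an endpoint with both. -/
def EdgeDist2 (e1 e2 : Sym2 (ℤ × ℤ)) : Prop :=
  e1 ≠ e2 ∧ ¬ SharesEndpoint e1 e2 ∧
    ∃ e3 ∈ T8.edgeSet, SharesEndpoint e1 e3 ∧ SharesEndpoint e3 e2

/-- `f` is an `L(1,2)`-edge labeling of `T8`: edges at distance `1` get distinct
labels and edges at distance `2` get labels differing by at least `2`. -/
def IsL12 (f : Sym2 (ℤ × ℤ) → ℕ) : Prop :=
  (∀ e1 ∈ T8.edgeSet, ∀ e2 ∈ T8.edgeSet, EdgeDist1 e1 e2 → f e1 ≠ f e2) ∧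
  (∀ e1 ∈ T8.edgeSet, ∀ e2 ∈ T8.edgeSet, EdgeDist2 e1 e2 → 2 ≤ |(f e1 : ℤ) - (f e2 : ℤ)|)

/-- An `L(1,2)`-edge labeling of `T8` with labels in `{0, …, n}`. -/
def IsL12Bounded (n : ℕ) (f : Sym2 (ℤ × ℤ) → ℕ) : Prop :=
  IsL12 f ∧ ∀ e ∈ T8.edgeSet, f e ≤ n

/-- The unit square `S(a,b)`. -/
def unitSquare (a b : ℤ) : Set (ℤ × ℤ) :=
  {(a, b), (a + 1, b), (a, b + 1), (a + 1, b + 1)}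

/-- `GS S`: the set of edges of `T8` incident to at least one vertex of `S`. -/
def GS (S : Set (ℤ × ℤ)) : Set (Sym2 (ℤ × ℤ)) :=
  {e | e ∈ T8.edgeSet ∧ ∃ v ∈ S, v ∈ e}

/-- `Sprime a b`: vertices at Chebyshev distance at most `2` from some vertex of
`S(a,b)` (that is, `S ∪ N(S) ∪ N(N(S))`). -/
def Sprime (a b : ℤ) : Set (ℤ × ℤ) :=
  {u | ∃ v ∈ unitSquare a b, max |u.1 - v.1| |u.2 - v.2| ≤ 2}

/-- Two edges sharing an endpoint `v`, written `e1 = {v, v+d1}` and `e2 = {v, v+d2}`,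
are at angle `45°` if exactly one of `d1, d2` has both coordinates nonzero and
`d1 · d2 = 1`. -/
def Angle45 (e1 e2 : Sym2 (ℤ × ℤ)) : Prop :=
  ∃ v d1 d2 : ℤ × ℤ, e1 = s(v, v + d1) ∧ e2 = s(v, v + d2) ∧
    Xor' (d1.1 ≠ 0 ∧ d1.2 ≠ 0) (d2.1 ≠ 0 ∧ d2.2 ≠ 0) ∧
    d1.1 * d2.1 + d1.2 * d2.2 = 1

/-- An edge is slanting if its endpoints differ in both coordinates. -/
def Slanting (e : Sym2 (ℤ × ℤ)) : Prop :=
  ∃ u v : ℤ × ℤ, e = s(u, v) ∧ u.1 ≠ v.1 ∧ u.2 ≠ v.2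

/-- `e, e', e''` form the edge set of a triangle of `T8`. -/
def TriangleEdgeSet (e e' e'' : Sym2 (ℤ × ℤ)) : Prop :=
  ∃ u v w : ℤ × ℤ, T8.Adj u v ∧ T8.Adj v w ∧ T8.Adj u w ∧
    ({e, e', e''} : Set (Sym2 (ℤ × ℤ))) = {s(u, v), s(v, w), s(u, w)}

/-- A triangle of `T8`: three pairwise adjacent vertices. -/
def IsTriangle (t : Finset (ℤ × ℤ)) : Prop :=
  t.card = 3 ∧ ∀ u ∈ t, ∀ v ∈ t, u ≠ v → T8.Adj u v

/-- The edges of a triangle. -/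
def triangleEdges (t : Finset (ℤ × ℤ)) : Set (Sym2 (ℤ × ℤ)) :=
  {e | ∃ u ∈ t, ∃ v ∈ t, u ≠ v ∧ e = s(u, v)}

lemma unitSquare_isClique (a b : ℤ) : T8.IsClique (unitSquare a b) := by
  intro u hu v hv hne
  refine ⟨hne, ?_⟩
  simp only [unitSquare, Set.mem_insert_iff, Set.mem_singleton_iff] at hu hv
  rcases hu with rfl | rfl | rfl | rfl <;> rcases hv with rfl | rfl | rfl | rfl <;> simp_all

/-- Two edges leaving a clique at different vertices are joined by the clique edge
between those vertices. -/
lemma edgeDist1_or_edgeDist2_of_mem_GS {S : Set (ℤ × ℤ)} (hS : T8.IsClique S)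
    {e1 e2 : Sym2 (ℤ × ℤ)} (he1 : e1 ∈ GS S) (he2 : e2 ∈ GS S) (hne : e1 ≠ e2) :
    EdgeDist1 e1 e2 ∨ EdgeDist2 e1 e2 := by
  obtain ⟨-, v1, hv1, hv1e⟩ := he1
  obtain ⟨-, v2, hv2, hv2e⟩ := he2
  by_cases hshare : SharesEndpoint e1 e2
  · exact Or.inl ⟨hne, hshare⟩
  have hv12 : v1 ≠ v2 := by
    rintro rfl
    exact hshare ⟨v1, hv1e, hv2e⟩
  exact Or.inr ⟨hne, hshare, s(v1, v2), hS hv1 hv2 hv12,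
    ⟨v1, hv1e, Sym2.mem_mk_left _ _⟩, ⟨v2, Sym2.mem_mk_right _ _, hv2e⟩⟩

lemma IsL12.ne_of_edgeDist1_or_edgeDist2 {f : Sym2 (ℤ × ℤ) → ℕ} (hf : IsL12 f)
    {e1 e2 : Sym2 (ℤ × ℤ)} (he1 : e1 ∈ T8.edgeSet) (he2 : e2 ∈ T8.edgeSet)
    (hclose : EdgeDist1 e1 e2 ∨ EdgeDist2 e1 e2) : f e1 ≠ f e2 := by
  rcases hclose with h1 | h2
  · exact hf.1 e1 he1 e2 he2 h1
  · intro heq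
    have hgap := hf.2 e1 he1 e2 he2 h2
    rw [heq, sub_self, abs_zero] at hgap
    omega

/-- Any two distinct edges of `G_S` are at distance `1` or `2`;
consequently every `L(1,2)`-edge labeling of `T8` is injective on `G_S`. -/
theorem GS_pairwise_close_and_injOn (a b : ℤ) :
    (∀ e1 ∈ GS (unitSquare a b), ∀ e2 ∈ GS (unitSquare a b), e1 ≠ e2 →
      EdgeDist1 e1 e2 ∨ EdgeDist2 e1 e2) ∧
    (∀ f : Sym2 (ℤ × ℤ) → ℕ, IsL12 f → Set.InjOn f (GS (unitSquare a b))) := by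
  have hclose : ∀ e1 ∈ GS (unitSquare a b), ∀ e2 ∈ GS (unitSquare a b), e1 ≠ e2 →
      EdgeDist1 e1 e2 ∨ EdgeDist2 e1 e2 := fun _ he1 _ he2 hne =>
    edgeDist1_or_edgeDist2_of_mem_GS (unitSquare_isClique a b) he1 he2 hne
  refine ⟨hclose, fun f hf e1 he1 e2 he2 hfe => ?_⟩
  by_contra hne
  exact hf.ne_of_edgeDist1_or_edgeDist2 he1.1 he2.1 (hclose e1 he1 e2 he2 hne) hfe
end

section
/- Let f be an L(1,2)-edge labeling of T8, let S be a unit square, and let c ≥ 1. Suppose e, e', e'' ∈ G_S are the three edges of a triangle of T8, with e slanting, f(e) = c, f(e') = c − 1 and f(e'') = c + 1. Then there exists a unit square S1 with all vertices in S' such that no edge in G_{S1} has label c under f. -/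
lemma T8_adj_iff {u v : ℤ × ℤ} :
    T8.Adj u v ↔ u ≠ v ∧ |u.1 - v.1| ≤ 1 ∧ |u.2 - v.2| ≤ 1 := by
  refine ⟨fun ⟨hne, hmax⟩ => ⟨hne, hmax ▸ le_max_left _ _, hmax ▸ le_max_right _ _⟩,
    fun ⟨hne, h1, h2⟩ => ⟨hne, le_antisymm (max_le h1 h2) ?_⟩⟩
  by_contra! h
  rw [max_lt_iff, Int.abs_lt_one_iff, Int.abs_lt_one_iff, sub_eq_zero, sub_eq_zero] at h
  exact hne (Prod.ext h.1 h.2)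

lemma slanting_mk_iff {u v : ℤ × ℤ} : Slanting s(u, v) ↔ u.1 ≠ v.1 ∧ u.2 ≠ v.2 := by
  refine ⟨fun ⟨x, y, hxy, h1, h2⟩ => ?_, fun h => ⟨u, v, rfl, h⟩⟩
  rcases Sym2.eq_iff.mp hxy with ⟨rfl, rfl⟩ | ⟨rfl, rfl⟩
  exacts [⟨h1, h2⟩, ⟨h1.symm, h2.symm⟩]

lemma TriangleEdgeSet.exists_eq_mk {e e' e'' : Sym2 (ℤ × ℤ)} (htri : TriangleEdgeSet e e' e'')
    (hne : e' ≠ e) : ∃ P Q R : ℤ × ℤ, e = s(P, Q) ∧ e' = s(R, P) ∧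
      T8.Adj P Q ∧ T8.Adj R P ∧ T8.Adj R Q := by
  obtain ⟨u, v, w, huv, hvw, huw, hset⟩ := htri
  have hmem : ∀ x ∈ ({e, e', e''} : Set (Sym2 (ℤ × ℤ))),
      x = s(u, v) ∨ x = s(v, w) ∨ x = s(u, w) := by
    simp [hset]
  rcases hmem e (by simp) with rfl | rfl | rfl <;>
    rcases hmem e' (by simp) with rfl | rfl | rfl
  · exact absurd rfl hne
  · exact ⟨v, u, w, Sym2.eq_swap, Sym2.eq_swap, huv.symm, hvw.symm, huw.symm⟩
  · exact ⟨u, v, w, rfl, Sym2.eq_swap, huv, huw.symm, hvw.symm⟩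
  · exact ⟨v, w, u, rfl, rfl, hvw, huv, huw⟩
  · exact absurd rfl hne
  · exact ⟨w, v, u, Sym2.eq_swap, rfl, hvw.symm, huw, huv⟩
  · exact ⟨u, w, v, rfl, Sym2.eq_swap, huw, huv.symm, hvw⟩
  · exact ⟨w, u, v, Sym2.eq_swap, rfl, huw.symm, hvw, huv.symm⟩
  · exact absurd rfl hne

lemma exists_unitSquare_opposite {P Q R : ℤ × ℤ} (hPQ : T8.Adj P Q) (hPQ1 : P.1 ≠ Q.1)
    (hPQ2 : P.2 ≠ Q.2) (hRP : T8.Adj R P) (hRQ : T8.Adj R Q) :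
    ∃ p : ℤ × ℤ, ∀ v ∈ unitSquare p.1 p.2,
      v ≠ P ∧ v ≠ Q ∧ |v.1 - R.1| ≤ 1 ∧ |v.2 - R.2| ≤ 1 := by
  obtain ⟨-, hPQ1', hPQ2'⟩ := T8_adj_iff.mp hPQ
  obtain ⟨hRP, hRP1, hRP2⟩ := T8_adj_iff.mp hRP
  obtain ⟨hRQ, hRQ1, hRQ2⟩ := T8_adj_iff.mp hRQ
  -- the reflection through `R` of the unit square spanned by `P, Q, R`: its corner opposite
  -- to `R` is `R - (P + Q - R)`
  refine ⟨(min R.1 (3 * R.1 - P.1 - Q.1), min R.2 (3 * R.2 - P.2 - Q.2)), fun v hv => ?_⟩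
  simp only [unitSquare, Set.mem_insert_iff, Set.mem_singleton_iff] at hv
  simp only [ne_eq, Prod.ext_iff, abs_le] at hPQ1' hPQ2' hRP hRP1 hRP2 hRQ hRQ1 hRQ2 ⊢
  rcases hv with rfl | rfl | rfl | rfl <;> omega

lemma mem_Sprime_of_adj {a b : ℤ} {x R v : ℤ × ℤ} (hx : x ∈ unitSquare a b) (hRx : T8.Adj R x)
    (hv1 : |v.1 - R.1| ≤ 1) (hv2 : |v.2 - R.2| ≤ 1) : v ∈ Sprime a b := by
  obtain ⟨-, hRx1, hRx2⟩ := T8_adj_iff.mp hRx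
  refine ⟨x, hx, max_le ?_ ?_⟩
  · linarith [abs_sub_le v.1 R.1 x.1]
  · linarith [abs_sub_le v.2 R.2 x.2]

namespace IsL12

variable {f : Sym2 (ℤ × ℤ) → ℕ} {g e : Sym2 (ℤ × ℤ)}

lemma ne_and_not_adj_of_label_eq (hf : IsL12 f) (hg : g ∈ T8.edgeSet) (he : e ∈ T8.edgeSet)
    (hne : g ≠ e) (hlabel : f g = f e) {x y : ℤ × ℤ} (hx : x ∈ g) (hy : y ∈ e) :
    x ≠ y ∧ ¬ T8.Adj x y := by
  have hfar : ¬ SharesEndpoint g e := fun h => hf.1 g hg e he ⟨hne, h⟩ hlabel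
  refine ⟨fun hxy => hfar ⟨x, hx, hxy ▸ hy⟩, fun hxy => ?_⟩
  have := hf.2 g hg e he ⟨hne, hfar, s(x, y), hxy, ⟨x, hx, Sym2.mem_mk_left x y⟩,
    ⟨y, Sym2.mem_mk_right x y, hy⟩⟩
  simp [hlabel] at this

lemma sharesEndpoint_of_adj (hf : IsL12 f) (hg : g ∈ T8.edgeSet) (he : e ∈ T8.edgeSet)
    (hlabel : |(f g : ℤ) - f e| < 2) {x y : ℤ × ℤ} (hx : x ∈ g) (hy : y ∈ e)
    (hxy : T8.Adj x y) : SharesEndpoint g e := by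
  by_contra hfar
  have hne : g ≠ e := by
    rintro rfl
    exact hfar ⟨x, hx, hx⟩
  exact (hf.2 g hg e he ⟨hne, hfar, s(x, y), hxy, ⟨x, hx, Sym2.mem_mk_left x y⟩,
    ⟨y, Sym2.mem_mk_right x y, hy⟩⟩).not_gt hlabel

lemma label_ne_of_near_apex (hf : IsL12 f) {P Q R : ℤ × ℤ} (hPQ : T8.Adj P Q)
    (hRP : T8.Adj R P) (hlabel : |(f s(P, Q) : ℤ) - f s(R, P)| < 2) (hg : g ∈ T8.edgeSet)
    {v : ℤ × ℤ} (hvg : v ∈ g) (hvP : v ≠ P) (hvQ : v ≠ Q) (hv1 : |v.1 - R.1| ≤ 1)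
    (hv2 : |v.2 - R.2| ≤ 1) : f g ≠ f s(P, Q) := by
  intro hgc
  have hne : g ≠ s(P, Q) := by
    rintro rfl
    rcases Sym2.mem_iff.mp hvg with h | h
    exacts [hvP h, hvQ h]
  have hfar {x : ℤ × ℤ} (hx : x ∈ g) : x ≠ P ∧ ¬ T8.Adj x P :=
    hf.ne_and_not_adj_of_label_eq hg hPQ hne hgc hx (Sym2.mem_mk_left P Q)
  have hvR : T8.Adj v R := by
    refine T8_adj_iff.mpr ⟨?_, hv1, hv2⟩
    rintro rfl
    exact (hfar hvg).2 hRP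
  obtain ⟨w, hwg, hwRP⟩ := hf.sharesEndpoint_of_adj hg hRP (hgc ▸ hlabel) hvg
    (Sym2.mem_mk_left R P) hvR
  rcases Sym2.mem_iff.mp hwRP with rfl | rfl
  exacts [(hfar hwg).2 hRP, (hfar hwg).1 rfl]

end IsL12

theorem triangle_slanting_one_square_general (f : Sym2 (ℤ × ℤ) → ℕ) (hf : IsL12 f)
    (a b : ℤ) (c : ℕ) (hc : 1 ≤ c) (e e' e'' : Sym2 (ℤ × ℤ))
    (he : e ∈ GS (unitSquare a b))
    (htri : TriangleEdgeSet e e' e'') (hsl : Slanting e)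
    (hfe : f e = c) (hfe' : f e' = c - 1) :
    ∃ p : ℤ × ℤ, unitSquare p.1 p.2 ⊆ Sprime a b ∧
      ∀ e1 ∈ GS (unitSquare p.1 p.2), f e1 ≠ c := by
  have hne : e' ≠ e := by
    rintro rfl
    omega
  obtain ⟨P, Q, R, rfl, rfl, hPQ, hRP, hRQ⟩ := htri.exists_eq_mk hne
  obtain ⟨hPQ1, hPQ2⟩ := slanting_mk_iff.mp hsl
  obtain ⟨-, x, hx, hxPQ⟩ := he
  obtain ⟨p, hp⟩ := exists_unitSquare_opposite hPQ hPQ1 hPQ2 hRP hRQ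
  have hRx : T8.Adj R x := by
    rcases Sym2.mem_iff.mp hxPQ with rfl | rfl
    exacts [hRP, hRQ]
  refine ⟨p, fun v hv => ?_, fun g ⟨hg, v, hv, hvg⟩ => ?_⟩
  · obtain ⟨-, -, hv1, hv2⟩ := hp v hv
    exact mem_Sprime_of_adj hx hRx hv1 hv2
  · obtain ⟨hvP, hvQ, hv1, hv2⟩ := hp v hv
    have hlabel : |(f s(P, Q) : ℤ) - f s(R, P)| < 2 := by
      rw [hfe, hfe', abs_lt]
      omega
    exact hfe ▸ hf.label_ne_of_near_apex hPQ hRP hlabel hg hvg hvP hvQ hv1 hv2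

/-- If three consecutive labels `c-1, c, c+1` are used on the three
edges of a triangle in `G_S` with `c` on the slanting edge, then there is a unit
square `S1` with all vertices in `S'` on which `c` is not used. -/
theorem triangle_slanting_one_square (f : Sym2 (ℤ × ℤ) → ℕ) (hf : IsL12 f)
    (a b : ℤ) (c : ℕ) (hc : 1 ≤ c) (e e' e'' : Sym2 (ℤ × ℤ))
    (he : e ∈ GS (unitSquare a b)) (he' : e' ∈ GS (unitSquare a b))
    (he'' : e'' ∈ GS (unitSquare a b))
    (htri : TriangleEdgeSet e e' e'') (hsl : Slanting e)
    (hfe : f e = c) (hfe' : f e' = c - 1) (hfe'' : f e'' = c + 1) :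
    ∃ p : ℤ × ℤ, unitSquare p.1 p.2 ⊆ Sprime a b ∧
      ∀ e1 ∈ GS (unitSquare p.1 p.2), f e1 ≠ c :=
  triangle_slanting_one_square_general f hf a b c hc e e' e'' he htri hsl hfe hfe'
end

section
/- Let f be an L(1,2)-edge labeling of T8, let S be a unit square, and let c ≥ 1. Suppose e, e', e'' ∈ G_S are three edges that do NOT form the edge set of a triangle of T8, with e non-slanting, f(e) = c, f(e') = c − 1 and f(e'') = c + 1. Then there exist three pairwise distinct unit squares S1, S2, S3, each with all vertices in S', such that no edge in G_{S1}, no edge in G_{S2} and no edge in G_{S3} has label c under f. -/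
/-!
Any two edges of `G_S` are at distance at most `2`, so the labels `c ± 1` force `e'` and `e''`
to share an endpoint with `e = uv`; their far endpoints `p` and `q` differ, since otherwise
`e, e', e''` would be a triangle. An edge with an endpoint `x ∉ {u, v}` within Chebyshev
distance `1` of `u`, `v`, `p` or `q` cannot carry the label `c`: near `u` or `v` it is at distance
at most `2` from `e`; near `p` it is either at distance `2` from `e'`, whose label is `c - 1`, or
it shares an endpoint with `e'` and is then again at distance at most `2` from `e`. So a unit
square avoiding `u, v` and covered by the closed neighbourhoods of `u, v, p, q` is free of `c`,
and a finite check over all configurations around `S(0,0)` finds three such squares in `S'`.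
-/

def Near (x y : ℤ × ℤ) : Prop := max |x.1 - y.1| |x.2 - y.2| ≤ 1

instance : DecidableRel Near := fun _ _ => inferInstanceAs (Decidable (_ ≤ _))

theorem near_refl (x : ℤ × ℤ) : Near x x := by simp [Near]

theorem Near.symm {x y : ℤ × ℤ} (h : Near x y) : Near y x := by
  rwa [Near, abs_sub_comm y.1, abs_sub_comm y.2]

theorem near_sub_iff {x y : ℤ × ℤ} (o : ℤ × ℤ) : Near (x - o) (y - o) ↔ Near x y := by
  simp [Near]

def kingMoves : List (ℤ × ℤ) :=
  [(1, 0), (-1, 0), (0, 1), (0, -1), (1, 1), (1, -1), (-1, 1), (-1, -1)]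

namespace T8

theorem adj_iff {x y : ℤ × ℤ} : T8.Adj x y ↔ x ≠ y ∧ Near x y := by
  refine ⟨fun h => ⟨h.1, h.2.le⟩, fun ⟨hne, hxy⟩ => ⟨hne, le_antisymm hxy ?_⟩⟩
  by_contra! hlt
  simp only [max_lt_iff, abs_lt] at hlt
  exact hne (Prod.ext (by omega) (by omega))

instance : DecidableRel T8.Adj := fun _ _ => decidable_of_iff _ adj_iff.symm

theorem adj_sub_iff {x y : ℤ × ℤ} (o : ℤ × ℤ) : T8.Adj (x - o) (y - o) ↔ T8.Adj x y := by
  simp [adj_iff, near_sub_iff]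

theorem adj_iff_sub_mem_kingMoves {x y : ℤ × ℤ} : T8.Adj x y ↔ y - x ∈ kingMoves := by
  simp only [adj_iff, Near, max_le_iff, abs_le, ne_eq, Prod.ext_iff, kingMoves, List.mem_cons,
    List.not_mem_nil, or_false, Prod.fst_sub, Prod.snd_sub]
  constructor <;> intro h <;> omega

theorem near_of_mem_edge {e : Sym2 (ℤ × ℤ)} (he : e ∈ T8.edgeSet) {x y : ℤ × ℤ} (hx : x ∈ e)
    (hy : y ∈ e) : Near x y := by
  induction e using Sym2.ind with
  | _ u v =>
    have huv := adj_iff.mp he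
    rcases Sym2.mem_iff.mp hx with rfl | rfl <;> rcases Sym2.mem_iff.mp hy with rfl | rfl
    exacts [near_refl _, huv.2, huv.2.symm, near_refl _]

end T8

def corners : List (ℤ × ℤ) := [(0, 0), (1, 0), (0, 1), (1, 1)]

def offsets : List (ℤ × ℤ) := [-2, -1, 0, 1, 2] ×ˢ [-2, -1, 0, 1, 2]

theorem offsets_nodup : offsets.Nodup := by decide

theorem mem_offsets_iff {w : ℤ × ℤ} : w ∈ offsets ↔ |w.1| ≤ 2 ∧ |w.2| ≤ 2 := by
  obtain ⟨i, j⟩ := w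
  simp only [offsets, List.mem_product, List.mem_cons, List.not_mem_nil, or_false, abs_le]
  constructor <;> intro h <;> omega

theorem mem_unitSquare_iff {a b : ℤ} {x : ℤ × ℤ} :
    x ∈ unitSquare a b ↔ x - (a, b) ∈ corners := by
  simp only [unitSquare, corners, Set.mem_insert_iff, Set.mem_singleton_iff, List.mem_cons,
    List.not_mem_nil, or_false, Prod.ext_iff, Prod.fst_sub, Prod.snd_sub]
  constructor <;> intro h <;> omega

instance (a b : ℤ) : DecidablePred (· ∈ unitSquare a b) :=
  fun _ => decidable_of_iff _ mem_unitSquare_iff.symm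

theorem sub_mem_unitSquare_zero_iff {a b : ℤ} {x : ℤ × ℤ} :
    x - (a, b) ∈ unitSquare 0 0 ↔ x ∈ unitSquare a b := by
  rw [mem_unitSquare_iff, mem_unitSquare_iff, Prod.mk_zero_zero, sub_zero]

theorem near_of_mem_unitSquare {a b : ℤ} {x y : ℤ × ℤ} (hx : x ∈ unitSquare a b)
    (hy : y ∈ unitSquare a b) : Near x y := by
  rw [← near_sub_iff (a, b)]
  rw [mem_unitSquare_iff] at hx hy
  generalize x - (a, b) = x at hx
  generalize y - (a, b) = y at hy
  revert x y
  decide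

theorem unitSquare_subset_sprime {a b : ℤ} {w : ℤ × ℤ} (hw : w - (a, b) ∈ offsets) :
    unitSquare w.1 w.2 ⊆ Sprime a b := by
  intro x hx
  rw [mem_unitSquare_iff] at hx
  simp only [mem_offsets_iff, abs_le, corners, List.mem_cons, List.not_mem_nil, or_false,
    Prod.ext_iff, Prod.fst_sub, Prod.snd_sub] at hw hx
  refine ⟨(if x.1 ≤ a then a else a + 1, if x.2 ≤ b then b else b + 1), ?_, ?_⟩
  · split_ifs <;> simp [unitSquare]
  · split_ifs <;> simp only [max_le_iff, abs_le] <;> omega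

theorem List.exists_three_ne_of_nodup {α : Type*} [DecidableEq α] {l : List α} (hl : l.Nodup)
    (h : 2 < l.length) : ∃ a ∈ l, ∃ b ∈ l, ∃ c ∈ l, a ≠ b ∧ a ≠ c ∧ b ≠ c := by
  obtain ⟨a, ha, b, hb, c, hc, hne⟩ :=
    Finset.two_lt_card.mp (by rwa [List.toFinset_card_of_nodup hl] : 2 < l.toFinset.card)
  exact ⟨a, List.mem_toFinset.mp ha, b, List.mem_toFinset.mp hb, c, List.mem_toFinset.mp hc,
    hne⟩

theorem edgeDist2_of_near {e₁ e₂ : Sym2 (ℤ × ℤ)} (hs : ¬ SharesEndpoint e₁ e₂) {x y : ℤ × ℤ}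
    (hx : x ∈ e₁) (hy : y ∈ e₂) (hxy : Near x y) : EdgeDist2 e₁ e₂ := by
  have hadj : T8.Adj x y := T8.adj_iff.mpr ⟨fun h => hs ⟨x, hx, h ▸ hy⟩, hxy⟩
  refine ⟨fun h => hs ⟨x, hx, h ▸ hx⟩, hs, s(x, y), hadj, ?_, ?_⟩
  exacts [⟨x, hx, Sym2.mem_mk_left x y⟩, ⟨y, Sym2.mem_mk_right x y, hy⟩]

namespace IsL12

variable {f : Sym2 (ℤ × ℤ) → ℕ} {e₁ e₂ : Sym2 (ℤ × ℤ)} {x y : ℤ × ℤ}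

theorem two_le_abs_sub_of_near (hf : IsL12 f) (he₁ : e₁ ∈ T8.edgeSet) (he₂ : e₂ ∈ T8.edgeSet)
    (hs : ¬ SharesEndpoint e₁ e₂) (hx : x ∈ e₁) (hy : y ∈ e₂) (hxy : Near x y) :
    2 ≤ |(f e₁ : ℤ) - f e₂| :=
  hf.2 e₁ he₁ e₂ he₂ (edgeDist2_of_near hs hx hy hxy)

theorem ne_of_near (hf : IsL12 f) (he₁ : e₁ ∈ T8.edgeSet) (he₂ : e₂ ∈ T8.edgeSet)
    (hne : e₁ ≠ e₂) (hx : x ∈ e₁) (hy : y ∈ e₂) (hxy : Near x y) : f e₁ ≠ f e₂ := by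
  by_cases hs : SharesEndpoint e₁ e₂
  · exact hf.1 e₁ he₁ e₂ he₂ ⟨hne, hs⟩
  · intro h
    have := hf.two_le_abs_sub_of_near he₁ he₂ hs hx hy hxy
    rw [h, sub_self, abs_zero] at this
    omega

theorem sharesEndpoint_of_mem_GS {a b : ℤ} (hf : IsL12 f) (he₁ : e₁ ∈ GS (unitSquare a b))
    (he₂ : e₂ ∈ GS (unitSquare a b)) (h : |(f e₁ : ℤ) - f e₂| < 2) : SharesEndpoint e₁ e₂ := by
  obtain ⟨he₁, x, hx, hxe⟩ := he₁
  obtain ⟨he₂, y, hy, hye⟩ := he₂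
  by_contra hs
  exact (hf.two_le_abs_sub_of_near he₁ he₂ hs hxe hye (near_of_mem_unitSquare hx hy)).not_gt h

/-- An edge touching `e'` is within distance `2` of `e`; otherwise it is at distance `2` from `e'`,
so its label differs from `f e' = f e ± 1` by at least `2`. -/
theorem ne_of_near_of_sharesEndpoint (hf : IsL12 f) {e e' X : Sym2 (ℤ × ℤ)}
    (he : e ∈ T8.edgeSet) (he' : e' ∈ T8.edgeSet) (hee' : SharesEndpoint e e')
    (hfe' : |(f e' : ℤ) - f e| = 1) (hX : X ∈ T8.edgeSet) (hx : x ∈ X) (hxe : x ∉ e)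
    (hy : y ∈ e') (hxy : Near x y) : f X ≠ f e := by
  have hXe : X ≠ e := by rintro rfl; exact hxe hx
  by_cases hXe' : SharesEndpoint X e'
  · obtain ⟨z, hzX, hze'⟩ := hXe'
    obtain ⟨t, hte, hte'⟩ := hee'
    exact hf.ne_of_near hX he hXe hzX hte (T8.near_of_mem_edge he' hze' hte')
  · intro h
    have := hf.two_le_abs_sub_of_near hX he' hXe' hx hy hxy
    rw [h, abs_sub_comm] at this
    omega

end IsL12

/-- `s(z, p)` is an edge of `G_S` meeting the edge `s(u, v)` at `z` only. -/
def AttachedEdge (S : Set (ℤ × ℤ)) (u v z p : ℤ × ℤ) : Prop :=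
  (z = u ∨ z = v) ∧ T8.Adj z p ∧ p ≠ u ∧ p ≠ v ∧ (z ∈ S ∨ p ∈ S)

instance (S : Set (ℤ × ℤ)) [DecidablePred (· ∈ S)] (u v z p : ℤ × ℤ) :
    Decidable (AttachedEdge S u v z p) := by
  unfold AttachedEdge; infer_instance

theorem exists_attachedEdge_of_sharesEndpoint {S : Set (ℤ × ℤ)} {u v : ℤ × ℤ}
    {e' : Sym2 (ℤ × ℤ)} (he' : e' ∈ GS S) (hs : SharesEndpoint s(u, v) e') (hne : s(u, v) ≠ e') :
    ∃ z p, e' = s(z, p) ∧ AttachedEdge S u v z p := by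
  obtain ⟨he'E, y, hyS, hye'⟩ := he'
  obtain ⟨z, hz, hze'⟩ := hs
  obtain ⟨p, rfl⟩ := Sym2.mem_iff_exists.mp hze'
  have hzp : T8.Adj z p := he'E
  have hz' : z = u ∨ z = v := Sym2.mem_iff.mp hz
  refine ⟨z, p, rfl, hz', hzp, ?_, ?_, ?_⟩
  · rintro rfl
    rcases hz' with rfl | rfl
    exacts [hzp.ne rfl, hne Sym2.eq_swap]
  · rintro rfl
    rcases hz' with rfl | rfl
    exacts [hne rfl, hzp.ne rfl]
  · rcases Sym2.mem_iff.mp hye' with rfl | rfl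
    exacts [Or.inl hyS, Or.inr hyS]

theorem triangleEdgeSet_of_attachedEdge {S : Set (ℤ × ℤ)} {u v z z' p : ℤ × ℤ}
    (huv : T8.Adj u v) (hz : AttachedEdge S u v z p) (hz' : AttachedEdge S u v z' p)
    (hne : s(z, p) ≠ s(z', p)) : TriangleEdgeSet s(u, v) s(z, p) s(z', p) := by
  obtain ⟨hzuv, hzp, -⟩ := hz
  obtain ⟨hz'uv, hz'p, -⟩ := hz'
  rcases hzuv with rfl | rfl <;> rcases hz'uv with rfl | rfl
  · exact absurd rfl hne
  · exact ⟨z, z', p, huv, hz'p, hzp, by rw [Set.pair_comm]⟩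
  · exact ⟨z', z, p, huv, hzp, hz'p, rfl⟩
  · exact absurd rfl hne

theorem IsL12.exists_attachedEdge {f : Sym2 (ℤ × ℤ) → ℕ} (hf : IsL12 f) {a b : ℤ}
    {u v : ℤ × ℤ} {e' : Sym2 (ℤ × ℤ)} (he : s(u, v) ∈ GS (unitSquare a b))
    (he' : e' ∈ GS (unitSquare a b)) (h : |(f e' : ℤ) - f s(u, v)| = 1) :
    ∃ z p, e' = s(z, p) ∧ AttachedEdge (unitSquare a b) u v z p := by
  refine exists_attachedEdge_of_sharesEndpoint he' (hf.sharesEndpoint_of_mem_GS he he' ?_) ?_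
  · rw [abs_sub_comm, h]
    norm_num
  · rintro rfl
    simp at h

def Shielded (u v p q w : ℤ × ℤ) : Prop :=
  ∀ x ∈ unitSquare w.1 w.2, x ≠ u ∧ x ≠ v ∧ (Near x u ∨ Near x v ∨ Near x p ∨ Near x q)

theorem shielded_iff {u v p q w : ℤ × ℤ} :
    Shielded u v p q w ↔ ∀ d ∈ corners, w + d ≠ u ∧ w + d ≠ v ∧
      (Near (w + d) u ∨ Near (w + d) v ∨ Near (w + d) p ∨ Near (w + d) q) := by
  refine ⟨fun h d hd => h _ ?_, fun h x hx => ?_⟩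
  · rwa [mem_unitSquare_iff, add_sub_cancel_left]
  · simpa using h (x - w) (mem_unitSquare_iff.mp hx)

instance (u v p q : ℤ × ℤ) : DecidablePred (Shielded u v p q) :=
  fun _ => decidable_of_iff _ shielded_iff.symm

theorem IsL12.ne_of_shielded {f : Sym2 (ℤ × ℤ) → ℕ} (hf : IsL12 f) {S : Set (ℤ × ℤ)}
    {u v z z' p q w : ℤ × ℤ} (he : s(u, v) ∈ T8.edgeSet) (hp : AttachedEdge S u v z p)
    (hq : AttachedEdge S u v z' q) (hfp : |(f s(z, p) : ℤ) - f s(u, v)| = 1)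
    (hfq : |(f s(z', q) : ℤ) - f s(u, v)| = 1) (hw : Shielded u v p q w) :
    ∀ X ∈ GS (unitSquare w.1 w.2), f X ≠ f s(u, v) := by
  have hshares {z p : ℤ × ℤ} (h : AttachedEdge S u v z p) : SharesEndpoint s(u, v) s(z, p) :=
    ⟨z, Sym2.mem_iff.mpr h.1, Sym2.mem_mk_left z p⟩
  rintro X ⟨hX, x, hxw, hxX⟩
  obtain ⟨hxu, hxv, hnear⟩ := hw x hxw
  have hxe : x ∉ s(u, v) := by simp [hxu, hxv]
  have hXe : X ≠ s(u, v) := by rintro rfl; exact hxe hxX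
  rcases hnear with h | h | h | h
  · exact hf.ne_of_near hX he hXe hxX (Sym2.mem_mk_left u v) h
  · exact hf.ne_of_near hX he hXe hxX (Sym2.mem_mk_right u v) h
  · exact hf.ne_of_near_of_sharesEndpoint he hp.2.1 (hshares hp) hfp hX hxX hxe
      (Sym2.mem_mk_right z p) h
  · exact hf.ne_of_near_of_sharesEndpoint he hq.2.1 (hshares hq) hfq hX hxX hxe
      (Sym2.mem_mk_right z' q) h

theorem shielded_sub_iff {u v p q w : ℤ × ℤ} (o : ℤ × ℤ) :
    Shielded (u - o) (v - o) (p - o) (q - o) (w - o) ↔ Shielded u v p q w := by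
  simp only [shielded_iff, sub_add_eq_add_sub, sub_left_inj, ne_eq, near_sub_iff]

theorem attachedEdge_sub_iff {a b : ℤ} {u v z p : ℤ × ℤ} :
    AttachedEdge (unitSquare 0 0) (u - (a, b)) (v - (a, b)) (z - (a, b)) (p - (a, b)) ↔
      AttachedEdge (unitSquare a b) u v z p := by
  simp only [AttachedEdge, sub_left_inj, ne_eq, T8.adj_sub_iff, sub_mem_unitSquare_zero_iff]

theorem two_lt_length_shielded_origin :
    ∀ u ∈ corners, ∀ v ∈ kingMoves.map (u + ·), u.1 = v.1 ∨ u.2 = v.2 →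
    ∀ z ∈ [u, v], ∀ p ∈ kingMoves.map (z + ·), AttachedEdge (unitSquare 0 0) u v z p →
    ∀ z' ∈ [u, v], ∀ q ∈ kingMoves.map (z' + ·), AttachedEdge (unitSquare 0 0) u v z' q →
    p ≠ q → 2 < (offsets.filter (Shielded u v p q ·)).length := by
  decide +kernel

theorem exists_three_shielded {a b : ℤ} {u v z z' p q : ℤ × ℤ} (hu : u ∈ unitSquare a b)
    (huv : T8.Adj u v) (hns : u.1 = v.1 ∨ u.2 = v.2)
    (hp : AttachedEdge (unitSquare a b) u v z p) (hq : AttachedEdge (unitSquare a b) u v z' q)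
    (hpq : p ≠ q) :
    ∃ w₁ w₂ w₃ : ℤ × ℤ, w₁ ≠ w₂ ∧ w₁ ≠ w₃ ∧ w₂ ≠ w₃ ∧
      ∀ w ∈ [w₁, w₂, w₃], unitSquare w.1 w.2 ⊆ Sprime a b ∧ Shielded u v p q w := by
  set o : ℤ × ℤ := (a, b)
  have hmoves {x y : ℤ × ℤ} (h : T8.Adj x y) : y - o ∈ kingMoves.map (x - o + ·) :=
    List.mem_map.mpr ⟨y - x, T8.adj_iff_sub_mem_kingMoves.mp h, by abel⟩
  have hends {x : ℤ × ℤ} (h : x = u ∨ x = v) : x - o ∈ [u - o, v - o] := by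
    rcases h with rfl | rfl <;> simp
  have hcount := two_lt_length_shielded_origin (u - o) (mem_unitSquare_iff.mp hu) (v - o)
    (hmoves huv) (by simpa using hns) (z - o) (hends hp.1) (p - o) (hmoves hp.2.1)
    (attachedEdge_sub_iff.mpr hp) (z' - o) (hends hq.1) (q - o) (hmoves hq.2.1)
    (attachedEdge_sub_iff.mpr hq) (by simpa using hpq)
  obtain ⟨w₁, hw₁, w₂, hw₂, w₃, hw₃, h₁₂, h₁₃, h₂₃⟩ :=
    List.exists_three_ne_of_nodup (offsets_nodup.filter _) hcount
  refine ⟨w₁ + o, w₂ + o, w₃ + o, by simpa, by simpa, by simpa, ?_⟩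
  have hgood {w : ℤ × ℤ}
      (hw : w ∈ offsets.filter (Shielded (u - o) (v - o) (p - o) (q - o) ·)) :
      unitSquare (w + o).1 (w + o).2 ⊆ Sprime a b ∧ Shielded u v p q (w + o) := by
    rw [List.mem_filter, decide_eq_true_iff] at hw
    refine ⟨unitSquare_subset_sprime (by simpa [o] using hw.1), ?_⟩
    rw [← shielded_sub_iff o, add_sub_cancel_right]
    exact hw.2
  simp only [List.mem_cons, List.not_mem_nil, or_false]
  rintro w (rfl | rfl | rfl)
  exacts [hgood hw₁, hgood hw₂, hgood hw₃]

/-- If three consecutive labels `c-1, c, c+1` are used on three edges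
of `G_S` not forming a triangle, with `c` on a non-slanting edge, then there are
three pairwise distinct unit squares with all vertices in `S'` on which `c` is not
used. -/
theorem notriangle_nonslanting_three_squares (f : Sym2 (ℤ × ℤ) → ℕ) (hf : IsL12 f)
    (a b : ℤ) (c : ℕ) (hc : 1 ≤ c) (e e' e'' : Sym2 (ℤ × ℤ))
    (he : e ∈ GS (unitSquare a b)) (he' : e' ∈ GS (unitSquare a b))
    (he'' : e'' ∈ GS (unitSquare a b))
    (htri : ¬ TriangleEdgeSet e e' e'') (hsl : ¬ Slanting e)
    (hfe : f e = c) (hfe' : f e' = c - 1) (hfe'' : f e'' = c + 1) :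
    ∃ p1 p2 p3 : ℤ × ℤ, p1 ≠ p2 ∧ p1 ≠ p3 ∧ p2 ≠ p3 ∧
      unitSquare p1.1 p1.2 ⊆ Sprime a b ∧ unitSquare p2.1 p2.2 ⊆ Sprime a b ∧
      unitSquare p3.1 p3.2 ⊆ Sprime a b ∧
      (∀ e1 ∈ GS (unitSquare p1.1 p1.2), f e1 ≠ c) ∧
      (∀ e1 ∈ GS (unitSquare p2.1 p2.2), f e1 ≠ c) ∧
      (∀ e1 ∈ GS (unitSquare p3.1 p3.2), f e1 ≠ c) := by
  have h₁ : |(f e' : ℤ) - f e| = 1 := by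
    rw [hfe, hfe', Nat.cast_sub hc, Nat.cast_one, sub_sub_cancel_left, abs_neg, abs_one]
  have h₂ : |(f e'' : ℤ) - f e| = 1 := by
    rw [hfe, hfe'', Nat.cast_add, Nat.cast_one, add_sub_cancel_left, abs_one]
  obtain ⟨u, hu, hue⟩ := he.2
  obtain ⟨v, rfl⟩ := Sym2.mem_iff_exists.mp hue
  obtain ⟨z, p, rfl, hp⟩ := hf.exists_attachedEdge he he' h₁
  obtain ⟨z', q, rfl, hq⟩ := hf.exists_attachedEdge he he'' h₂
  have hpq : p ≠ q := by
    rintro rfl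
    refine htri (triangleEdgeSet_of_attachedEdge he.1 hp hq fun h => ?_)
    rw [h, hfe''] at hfe'
    omega
  have hns : u.1 = v.1 ∨ u.2 = v.2 := by
    by_contra! h
    exact hsl ⟨u, v, rfl, h⟩
  obtain ⟨w₁, w₂, w₃, h₁₂, h₁₃, h₂₃, hw⟩ := exists_three_shielded hu he.1 hns hp hq hpq
  have hfree {w : ℤ × ℤ} (h : w ∈ [w₁, w₂, w₃]) : ∀ X ∈ GS (unitSquare w.1 w.2), f X ≠ c :=
    hfe ▸ hf.ne_of_shielded he.1 hp hq h₁ h₂ (hw w h).2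
  exact ⟨w₁, w₂, w₃, h₁₂, h₁₃, h₂₃, (hw w₁ (by simp)).1, (hw w₂ (by simp)).1,
    (hw w₃ (by simp)).1, hfree (by simp), hfree (by simp), hfree (by simp)⟩
end
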